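/- (Stinespring representation theorem) A linear map Φ : M_p → M_q is completely positive if and only if there exist m ∈ ℕ and A ∈ M_{qm×p} such that Φ(X) = tr_m(A X A^T) for all X ∈ M_p. -/

import Mathlib

/-!
If `Φ` is completely positive, its Choi matrix `[Φ(E_xy)]_{x,y}` is positive semidefinite,
being the blockwise image of the rank-one matrix `vec 1 (vec 1)ᵀ`. Factoring it as `BᵀB`, the
rows of `B` are Kraus operators `K_r` with `Φ X = ∑_r K_r X K_rᵀ`, and stacking them gives `A`.
Conversely `tr_m(A X Aᵀ) = ∑_k A_k X A_kᵀ` for the blocks `A_k` of `A`, and the `n`-fold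
amplification of `X ↦ K X Kᵀ` is the congruence by `1_n ⊗ K`, so it preserves positivity.
-/

open Matrix

/-- The partial trace `tr_m` from `M_q(M_m)` to `M_q`, taking blockwise traces. -/
noncomputable def partialTrace (q m : ℕ) (M : Matrix (Fin q × Fin m) (Fin q × Fin m) ℝ) :
    Matrix (Fin q) (Fin q) ℝ :=
  Matrix.of fun i j => ∑ k : Fin m, M (i, k) (j, k)

/-- Blockwise application of a map `Φ : M_p → M_q` to an `n × n` block matrix. -/
noncomputable def blockMap (p q n : ℕ)
    (Φ : Matrix (Fin p) (Fin p) ℝ → Matrix (Fin q) (Fin q) ℝ)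
    (M : Matrix (Fin n × Fin p) (Fin n × Fin p) ℝ) :
    Matrix (Fin n × Fin q) (Fin n × Fin q) ℝ :=
  Matrix.of fun a b => Φ (Matrix.of fun i j => M (a.1, i) (b.1, j)) a.2 b.2

/-- Complete positivity of `Φ : M_p → M_q`. -/
def IsCompletelyPositive (p q : ℕ)
    (Φ : Matrix (Fin p) (Fin p) ℝ → Matrix (Fin q) (Fin q) ℝ) : Prop :=
  ∀ n : ℕ, ∀ M : Matrix (Fin n × Fin p) (Fin n × Fin p) ℝ,
    M.PosSemidef → (blockMap p q n Φ M).PosSemidef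

open scoped Kronecker

section

variable {p q : ℕ}

lemma blockMap_sum {κ : Type*} [Fintype κ] (n : ℕ)
    (Ψ : κ → Matrix (Fin p) (Fin p) ℝ → Matrix (Fin q) (Fin q) ℝ)
    (M : Matrix (Fin n × Fin p) (Fin n × Fin p) ℝ) :
    blockMap p q n (fun X => ∑ k, Ψ k X) M = ∑ k, blockMap p q n (Ψ k) M := by
  ext a b
  simp [blockMap, Matrix.sum_apply]

lemma blockMap_mul_mul_transpose (n : ℕ) (K : Matrix (Fin q) (Fin p) ℝ)
    (M : Matrix (Fin n × Fin p) (Fin n × Fin p) ℝ) :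
    blockMap p q n (fun X => K * X * Kᵀ) M =
      ((1 : Matrix (Fin n) (Fin n) ℝ) ⊗ₖ K) * M *
        ((1 : Matrix (Fin n) (Fin n) ℝ) ⊗ₖ K)ᵀ := by
  ext ⟨x, a⟩ ⟨y, b⟩
  simp [blockMap, mul_apply, Fintype.sum_prod_type, one_apply, Finset.sum_mul, ite_mul]

lemma isCompletelyPositive_mul_mul_transpose (K : Matrix (Fin q) (Fin p) ℝ) :
    IsCompletelyPositive p q (fun X => K * X * Kᵀ) := fun n M hM => by
  rw [blockMap_mul_mul_transpose]
  exact hM.mul_mul_conjTranspose_same _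

lemma IsCompletelyPositive.sum {κ : Type*} [Fintype κ]
    {Ψ : κ → Matrix (Fin p) (Fin p) ℝ → Matrix (Fin q) (Fin q) ℝ}
    (hΨ : ∀ k, IsCompletelyPositive p q (Ψ k)) :
    IsCompletelyPositive p q (fun X => ∑ k, Ψ k X) := fun n M hM => by
  rw [blockMap_sum]
  exact posSemidef_sum _ fun k _ => hΨ k n M hM

def stinespringMatrix {m : ℕ} (K : Fin m → Matrix (Fin q) (Fin p) ℝ) :
    Matrix (Fin q × Fin m) (Fin p) ℝ :=
  of fun ak j => K ak.2 ak.1 j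

lemma partialTrace_stinespringMatrix {m : ℕ} (K : Fin m → Matrix (Fin q) (Fin p) ℝ)
    (X : Matrix (Fin p) (Fin p) ℝ) :
    partialTrace q m (stinespringMatrix K * X * (stinespringMatrix K)ᵀ) =
      ∑ k, K k * X * (K k)ᵀ := by
  ext a b
  simp [partialTrace, stinespringMatrix, Matrix.sum_apply, mul_apply]

def choiMatrix (p q : ℕ) (Φ : Matrix (Fin p) (Fin p) ℝ → Matrix (Fin q) (Fin q) ℝ) :
    Matrix (Fin p × Fin q) (Fin p × Fin q) ℝ :=
  of fun xa yb => Φ (single xa.1 yb.1 1) xa.2 yb.2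

lemma choiMatrix_eq_blockMap (Φ : Matrix (Fin p) (Fin p) ℝ → Matrix (Fin q) (Fin q) ℝ) :
    choiMatrix p q Φ = blockMap p q p Φ (vecMulVec (vec 1) (vec 1)) := by
  ext ⟨x, a⟩ ⟨y, b⟩
  simp only [choiMatrix, blockMap, of_apply]
  congr 2
  ext i j
  simp only [vecMulVec, vec, of_apply, one_apply, single_apply, mul_ite, mul_one, mul_zero]
  grind

lemma IsCompletelyPositive.posSemidef_choiMatrix
    {Φ : Matrix (Fin p) (Fin p) ℝ → Matrix (Fin q) (Fin q) ℝ}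
    (hΦ : IsCompletelyPositive p q Φ) : (choiMatrix p q Φ).PosSemidef := by
  rw [choiMatrix_eq_blockMap]
  exact hΦ p _ <| by
    simpa using posSemidef_vecMulVec_self_star (vec (1 : Matrix (Fin p) (Fin p) ℝ))

lemma IsLinearMap.apply_eq_sum_single
    {Φ : Matrix (Fin p) (Fin p) ℝ → Matrix (Fin q) (Fin q) ℝ}
    (hΦ : IsLinearMap ℝ Φ) (X : Matrix (Fin p) (Fin p) ℝ) :
    Φ X = ∑ x, ∑ y, X x y • Φ (single x y 1) := by
  let L := hΦ.mk' Φ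
  have hsingle (x y : Fin p) : single x y (X x y) = X x y • single x y 1 := by
    rw [smul_single, smul_eq_mul, mul_one]
  calc Φ X = L (∑ x, ∑ y, single x y (X x y)) := by rw [← matrix_eq_sum_single]; rfl
    _ = _ := by simp only [map_sum, hsingle, L.map_smul]; rfl

lemma IsLinearMap.eq_sum_mul_mul_transpose_of_choiMatrix_eq
    {Φ : Matrix (Fin p) (Fin p) ℝ → Matrix (Fin q) (Fin q) ℝ} (hΦ : IsLinearMap ℝ Φ)
    {κ : Type*} [Fintype κ] {B : Matrix κ (Fin p × Fin q) ℝ}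
    (hB : choiMatrix p q Φ = Bᵀ * B) (X : Matrix (Fin p) (Fin p) ℝ) :
    Φ X = ∑ r, (of fun a x => B r (x, a)) * X * (of fun a x => B r (x, a))ᵀ := by
  have hsingle (x y : Fin p) (a b : Fin q) :
      Φ (single x y 1) a b = ∑ r, B r (x, a) * B r (y, b) := by
    simpa [choiMatrix, mul_apply] using congr_fun₂ hB (x, a) (y, b)
  ext a b
  rw [hΦ.apply_eq_sum_single]
  simp only [Matrix.sum_apply, Matrix.smul_apply, hsingle, mul_apply, of_apply, transpose_apply,
    smul_eq_mul, Finset.mul_sum, Finset.sum_mul]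
  simp only [Finset.sum_comm (γ := κ)]
  rw [Finset.sum_comm]
  exact Finset.sum_congr rfl fun _ _ => Finset.sum_congr rfl fun _ _ =>
    Finset.sum_congr rfl fun _ _ => by ring

open scoped MatrixOrder Matrix.Norms.L2Operator in
lemma Matrix.PosSemidef.exists_eq_transpose_mul_self {n : Type*} [Fintype n] [DecidableEq n]
    {A : Matrix n n ℝ} (hA : A.PosSemidef) : ∃ B : Matrix n n ℝ, A = Bᵀ * B :=
  CStarAlgebra.nonneg_iff_eq_star_mul_self.mp hA.nonneg

lemma IsCompletelyPositive.exists_kraus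
    {Φ : Matrix (Fin p) (Fin p) ℝ → Matrix (Fin q) (Fin q) ℝ}
    (hΦ : IsCompletelyPositive p q Φ) (hlin : IsLinearMap ℝ Φ) :
    ∃ K : Fin p × Fin q → Matrix (Fin q) (Fin p) ℝ,
      ∀ X, Φ X = ∑ r, K r * X * (K r)ᵀ := by
  obtain ⟨B, hB⟩ := hΦ.posSemidef_choiMatrix.exists_eq_transpose_mul_self
  exact ⟨_, hlin.eq_sum_mul_mul_transpose_of_choiMatrix_eq hB⟩

end

/-- (Stinespring representation theorem.)  A linear map `Φ : M_p → M_q` is completely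
positive iff there exist `m ∈ ℕ` and `A ∈ M_{qm×p}` with `Φ(X) = tr_m(A X Aᵀ)`. -/
theorem stinespring_representation (p q : ℕ)
    (Φ : Matrix (Fin p) (Fin p) ℝ → Matrix (Fin q) (Fin q) ℝ)
    (hΦ : IsLinearMap ℝ Φ) :
    IsCompletelyPositive p q Φ ↔
      ∃ m : ℕ, ∃ A : Matrix (Fin q × Fin m) (Fin p) ℝ,
        ∀ X, Φ X = partialTrace q m (A * X * Aᵀ) := by
  constructor
  · intro hCP
    obtain ⟨K, hK⟩ := hCP.exists_kraus hΦ
    let e : Fin (p * q) ≃ Fin p × Fin q := finProdFinEquiv.symm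
    refine ⟨p * q, stinespringMatrix (K ∘ e), fun X => ?_⟩
    rw [partialTrace_stinespringMatrix, hK, ← e.sum_comp]
    rfl
  · rintro ⟨m, A, hA⟩
    have hKraus : Φ = fun X => ∑ k, A.submatrix (·, k) id * X * (A.submatrix (·, k) id)ᵀ :=
      funext fun X => by rw [hA, ← partialTrace_stinespringMatrix]; rfl
    rw [hKraus]
    exact .sum fun k => isCompletelyPositive_mul_mul_transpose _
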